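/- arXiv:1908.04898 — 7 statements merged into one kernel-verified Lean document; each statement's English description precedes it below -/
import Mathlib

section
/- In the Jordan plane k⟨u,v⟩/(vu - uv - u²), for all positive integers i and j, vⁱ·uʲ = Σ_{m=0}^{i} m!·C(j+m-1, m)·C(i, m)·u^{j+m}·v^{i-m}, where C denotes a binomial coefficient. -/
/-- The defining relation of the Jordan plane: `v * u = u * v + u ^ 2`. -/
inductive JordanRel (K : Type*) [Field K] :
    FreeAlgebra K (Fin 2) → FreeAlgebra K (Fin 2) → Prop
  | rel : JordanRel K (FreeAlgebra.ι K 1 * FreeAlgebra.ι K 0)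
      (FreeAlgebra.ι K 0 * FreeAlgebra.ι K 1 + FreeAlgebra.ι K 0 ^ 2)

/-- The Jordan plane `k⟨u,v⟩/(vu - uv - u²)`. -/
abbrev JordanPlane (K : Type*) [Field K] := RingQuot (JordanRel K)

/-- The generator `u` of the Jordan plane. -/
noncomputable def JordanPlane.u (K : Type*) [Field K] : JordanPlane K :=
  RingQuot.mkAlgHom K (JordanRel K) (FreeAlgebra.ι K 0)

/-- The generator `v` of the Jordan plane. -/
noncomputable def JordanPlane.v (K : Type*) [Field K] : JordanPlane K :=
  RingQuot.mkAlgHom K (JordanRel K) (FreeAlgebra.ι K 1)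

open JordanPlane Finset

lemma jp_vu {K : Type*} [Field K] : v K * u K = u K * v K + u K ^ 2 := by
  have := RingQuot.mkAlgHom_rel K (JordanRel.rel (K := K))
  simpa [JordanPlane.u, JordanPlane.v, map_mul, map_add, map_pow] using this

lemma jp_v_mul_upow {K : Type*} [Field K] :
    ∀ j : ℕ, v K * u K ^ j = u K ^ j * v K + j • u K ^ (j + 1) := by
  intro j
  induction j with
  | zero => simp
  | succ j ih =>
    rw [pow_succ, ← mul_assoc, ih]
    rw [add_mul, mul_assoc, jp_vu]
    rw [smul_mul_assoc, ← pow_succ]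
    rw [mul_add, ← mul_assoc, ← pow_succ, ← pow_add, succ_nsmul]
    abel

/-- coefficient -/
def jcc (n i m : ℕ) : ℕ := m.factorial * (n + m).choose m * i.choose m

lemma jcc_rec (n i m : ℕ) :
    jcc n (i + 1) (m + 1) = jcc n i (m + 1) + (n + 1 + m) * jcc n i m := by
  have h' : (n + m + 1) * (n + m).choose m = (n + m + 1).choose (m + 1) * (m + 1) := by
    simpa using Nat.add_one_mul_choose_eq (n + m) m
  have e : (n + m + 1) * (m.factorial * (n + m).choose m * i.choose m)
      = m.factorial * ((n + m + 1) * (n + m).choose m) * i.choose m := by ring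
  show (m+1).factorial * (n + (m+1)).choose (m+1) * (i+1).choose (m+1) = _
  have hn : n + (m + 1) = n + m + 1 := rfl
  have hn2 : n + 1 + m = n + m + 1 := by omega
  rw [hn, hn2, Nat.choose_succ_succ i m, Nat.factorial_succ]
  show _ = (m+1).factorial * (n + m + 1).choose (m+1) * i.choose (m+1)
      + (n + m + 1) * (m.factorial * (n + m).choose m * i.choose m)
  rw [Nat.factorial_succ, e, h']
  ring

lemma jcc_zero (n i : ℕ) : jcc n i 0 = 1 := by simp [jcc]

lemma jp_key {K : Type*} [Field K] (n : ℕ) : ∀ i : ℕ,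
    v K ^ i * u K ^ (n + 1) =
      ∑ m ∈ range (i + 1), jcc n i m • (u K ^ (n + 1 + m) * v K ^ (i - m)) := by
  intro i
  induction i with
  | zero => simp [jcc]
  | succ i ih =>
    calc v K ^ (i + 1) * u K ^ (n + 1)
        = v K * (v K ^ i * u K ^ (n + 1)) := by rw [pow_succ', mul_assoc]
      _ = ∑ m ∈ range (i + 1),
            jcc n i m • ((v K * u K ^ (n + 1 + m)) * v K ^ (i - m)) := by
          rw [ih, Finset.mul_sum]
          exact Finset.sum_congr rfl fun m _ => by rw [mul_smul_comm, mul_assoc]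
      _ = ∑ m ∈ range (i + 1),
            (jcc n i m • (u K ^ (n + 1 + m) * v K ^ (i + 1 - m))
              + ((n + 1 + m) * jcc n i m) •
                  (u K ^ (n + 1 + (m + 1)) * v K ^ (i + 1 - (m + 1)))) := by
          refine Finset.sum_congr rfl fun m hm => ?_
          have hm' : m ≤ i := by simpa [Nat.lt_succ_iff] using hm
          have e1 : i + 1 - m = (i - m) + 1 := by omega
          have e2 : n + 1 + (m + 1) = (n + 1 + m) + 1 := rfl
          have e3 : i + 1 - (m + 1) = i - m := by omega
          rw [jp_v_mul_upow, add_mul, smul_mul_assoc, smul_add,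
            mul_assoc (u K ^ (n + 1 + m)) (v K) (v K ^ (i - m)), ← pow_succ',
            ← e1, ← e2, ← e3, smul_comm (jcc n i m) (n + 1 + m), smul_smul]
      _ = (∑ m ∈ range (i + 1), jcc n i m • (u K ^ (n + 1 + m) * v K ^ (i + 1 - m)))
          + ∑ m ∈ range (i + 1), ((n + 1 + m) * jcc n i m) •
              (u K ^ (n + 1 + (m + 1)) * v K ^ (i + 1 - (m + 1))) :=
          Finset.sum_add_distrib
      _ = ∑ m ∈ range (i + 1 + 1),
            jcc n (i + 1) m • (u K ^ (n + 1 + m) * v K ^ (i + 1 - m)) := by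
          rw [Finset.sum_range_succ'
            (fun m => jcc n (i + 1) m • (u K ^ (n + 1 + m) * v K ^ (i + 1 - m))) (i + 1)]
          have h0 : jcc n (i + 1) 0 = jcc n i 0 := by simp [jcc]
          simp only [jcc_rec, add_smul, Finset.sum_add_distrib, h0]
          rw [add_right_comm]
          rw [← Finset.sum_range_succ'
            (fun m => jcc n i m • (u K ^ (n + 1 + m) * v K ^ (i + 1 - m))) (i + 1)]
          rw [Finset.sum_range_succ
            (fun m => jcc n i m • (u K ^ (n + 1 + m) * v K ^ (i + 1 - m))) (i + 1)]
          have hz : jcc n i (i + 1) = 0 := by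
            simp [jcc, Nat.choose_eq_zero_of_lt (Nat.lt_succ_self i)]
          rw [hz, zero_smul, add_zero]

/-- In the Jordan plane, for all positive integers `i`, `j`,
`v^i * u^j = ∑_{m=0}^{i} m! * C(j+m-1,m) * C(i,m) • u^(j+m) * v^(i-m)`. -/
theorem jordan_vpow_mul_upow {K : Type*} [Field K] [CharZero K] :
    ∀ i j : ℕ, 0 < i → 0 < j →
      JordanPlane.v K ^ i * JordanPlane.u K ^ j =
        ∑ m ∈ Finset.range (i + 1),
          (m.factorial * (j + m - 1).choose m * i.choose m) •
            (JordanPlane.u K ^ (j + m) * JordanPlane.v K ^ (i - m)) := by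
  intro i j _ hj
  obtain ⟨n, rfl⟩ := Nat.exists_eq_add_of_lt hj
  simp only [zero_add]
  rw [jp_key n i]
  refine Finset.sum_congr rfl fun m _ => ?_
  have e1 : n + 1 + m - 1 = n + m := by omega
  rw [e1]
  rfl
end

section
/- Let n, k be coprime positive integers with k ≢ 2 (mod 4), and let G = G_{n,k} ≤ GL₂(k) be the group generated by g = diag(ω_n, ω_n^{-1}) and h = antidiag(ω_{2k}, ω_{2k}), where ω_m denotes a primitive m-th root of unity. Then |G| = 2nk and G has the presentation ⟨g, h | gⁿ = 1, h^{2k} = 1, hg = g^{n-1}h⟩. -/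
/-!
`g` has order `n`, `h` has order `2k`, and `⟨g⟩ ∩ ⟨h⟩ = 1`: a common power `gᵃ = hᵇ` is diagonal,
so `b` is even and `hᵇ` is the scalar `ω2kᵇ`, which is both an `n`-th and a `k`-th root of unity,
hence `1`. So the `2nk` products `gᵃ hᵇ` with `a < n`, `b < 2k` are distinct. In the presented
group, `y x = xⁿ⁻¹ y` moves every `x` to the left, so every element is some `xᵃ yᵇ` with `a < n`,
`b < 2k`; the canonical map onto `⟨g, h⟩` is therefore injective on a surjective family of words,
hence an isomorphism.
-/

namespace Subgroup

variable {G : Type*} [Group G] {x y : G}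

theorem exists_pow_mul_pow_of_mem_closure_pair {n m r : ℕ} (hn : 0 < n) (hm : 0 < m)
    (hx : x ^ n = 1) (hy : y ^ m = 1) (hyx : SemiconjBy y x (x ^ r)) {z : G}
    (hz : z ∈ closure {x, y}) : ∃ a < n, ∃ b < m, z = x ^ a * y ^ b := by
  have hfin : ∀ w ∈ ({x, y} : Set G), IsOfFinOrder w := by
    rintro w (rfl | rfl)
    exacts [isOfFinOrder_iff_pow_eq_one.2 ⟨n, hn, hx⟩, isOfFinOrder_iff_pow_eq_one.2 ⟨m, hm, hy⟩]
  rw [← mem_toSubmonoid, closure_toSubmonoid_of_isOfFinOrder hfin] at hz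
  have hword : ∃ a b : ℕ, z = x ^ a * y ^ b := by
    induction hz using Submonoid.closure_induction_left with
    | one => exact ⟨0, 0, by simp⟩
    | mul_left w hw z _ ih =>
      obtain ⟨a, b, rfl⟩ := ih
      rcases hw with rfl | rfl
      · exact ⟨a + 1, b, by rw [pow_succ', mul_assoc]⟩
      · refine ⟨r * a, b + 1, ?_⟩
        rw [← mul_assoc, (hyx.pow_right a).eq, ← pow_mul, mul_assoc, ← pow_succ']
  obtain ⟨a, b, rfl⟩ := hword
  exact ⟨a % n, Nat.mod_lt _ hn, b % m, Nat.mod_lt _ hm,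
    by rw [← pow_eq_pow_mod a hx, ← pow_eq_pow_mod b hy]⟩

theorem injective_pow_mul_pow_of_disjoint {n m : ℕ} (hxn : orderOf x = n) (hym : orderOf y = m)
    (hxy : Disjoint (zpowers x) (zpowers y)) :
    Function.Injective fun p : Fin n × Fin m => x ^ (p.1 : ℕ) * y ^ (p.2 : ℕ) := by
  rintro ⟨a, b⟩ ⟨c, d⟩ hab
  dsimp only at hab
  have hx_eq : x ^ (a : ℕ) = x ^ (c : ℕ) := by
    have hmeet : (x ^ (c : ℕ))⁻¹ * x ^ (a : ℕ) = y ^ (d : ℕ) * (y ^ (b : ℕ))⁻¹ := by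
      rw [inv_mul_eq_iff_eq_mul, ← mul_assoc, eq_mul_inv_iff_mul_eq, hab]
    have hone := disjoint_def.1 hxy
      (mul_mem (inv_mem (npow_mem_zpowers x c)) (npow_mem_zpowers x a))
      (hmeet ▸ mul_mem (npow_mem_zpowers y d) (inv_mem (npow_mem_zpowers y b)))
    rwa [inv_mul_eq_one, eq_comm] at hone
  have hy_eq : y ^ (b : ℕ) = y ^ (d : ℕ) := by rwa [hx_eq, mul_right_inj] at hab
  subst hxn hym
  exact Prod.ext (Fin.ext (pow_injOn_Iio_orderOf a.2 c.2 hx_eq))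
    (Fin.ext (pow_injOn_Iio_orderOf b.2 d.2 hy_eq))

end Subgroup

namespace Matrix

variable {R : Type*} [CommRing R]

theorem fin_two_diagonal_pow (p q : R) (m : ℕ) :
    !![p, 0; 0, q] ^ m = !![p ^ m, 0; 0, q ^ m] := by
  induction m with
  | zero => simp [one_fin_two]
  | succ m ih => simp [pow_succ, ih]

theorem fin_two_antidiagonal_pow_two_mul (s : R) (c : ℕ) :
    !![0, s; s, 0] ^ (2 * c) = !![s ^ (2 * c), 0; 0, s ^ (2 * c)] := by
  have hsq : !![0, s; s, 0] ^ 2 = !![s ^ 2, 0; 0, s ^ 2] := by simp [sq]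
  rw [pow_mul, hsq, fin_two_diagonal_pow, ← pow_mul]

theorem fin_two_antidiagonal_pow_two_mul_add_one (s : R) (c : ℕ) :
    !![0, s; s, 0] ^ (2 * c + 1) = !![0, s ^ (2 * c + 1); s ^ (2 * c + 1), 0] := by
  simp [pow_succ, fin_two_antidiagonal_pow_two_mul]

end Matrix

section DiagonalAntidiagonal

variable {K : Type*} [Field K] {n k : ℕ} {ωn ω2k : K} {g h : (Matrix (Fin 2) (Fin 2) K)ˣ}

theorem orderOf_of_coe_eq_diag (hωn : IsPrimitiveRoot ωn n)
    (hg : (g : Matrix (Fin 2) (Fin 2) K) = !![ωn, 0; 0, ωn⁻¹]) : orderOf g = n := by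
  have hpow (l : ℕ) : ((g ^ l : (Matrix (Fin 2) (Fin 2) K)ˣ) : Matrix (Fin 2) (Fin 2) K) =
      !![ωn ^ l, 0; 0, ωn⁻¹ ^ l] := by
    rw [Units.val_pow_eq_pow_val, hg, Matrix.fin_two_diagonal_pow]
  refine Nat.dvd_antisymm (orderOf_dvd_of_pow_eq_one (Units.ext ?_)) (hωn.dvd_of_pow_eq_one _ ?_)
  · rw [hpow, inv_pow, hωn.pow_eq_one, inv_one, Units.val_one, Matrix.one_fin_two]
  · have h00 := Matrix.ext_iff.2 (congrArg Units.val (pow_orderOf_eq_one g)) 0 0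
    rw [hpow] at h00
    simpa using h00

theorem orderOf_of_coe_eq_antidiag (hω2k : IsPrimitiveRoot ω2k (2 * k))
    (hh : (h : Matrix (Fin 2) (Fin 2) K) = !![0, ω2k; ω2k, 0]) : orderOf h = 2 * k := by
  refine Nat.dvd_antisymm (orderOf_dvd_of_pow_eq_one (Units.ext ?_)) ?_
  · rw [Units.val_pow_eq_pow_val, hh, Matrix.fin_two_antidiagonal_pow_two_mul, hω2k.pow_eq_one,
      Units.val_one, Matrix.one_fin_two]
  have h00 := Matrix.ext_iff.2 (congrArg Units.val (pow_orderOf_eq_one h)) 0 0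
  obtain ⟨c, hc | hc⟩ := Nat.even_or_odd' (orderOf h) <;> rw [hc] at h00 ⊢
  · rw [Units.val_pow_eq_pow_val, hh, Matrix.fin_two_antidiagonal_pow_two_mul] at h00
    exact hω2k.dvd_of_pow_eq_one _ (by simpa using h00)
  · rw [Units.val_pow_eq_pow_val, hh, Matrix.fin_two_antidiagonal_pow_two_mul_add_one] at h00
    simp at h00

theorem semiconjBy_of_coe_eq_antidiag_diag (hn : 0 < n) (hωn : IsPrimitiveRoot ωn n)
    (hg : (g : Matrix (Fin 2) (Fin 2) K) = !![ωn, 0; 0, ωn⁻¹])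
    (hh : (h : Matrix (Fin 2) (Fin 2) K) = !![0, ω2k; ω2k, 0]) : SemiconjBy h g (g ^ (n - 1)) := by
  have hinv : ωn ^ (n - 1) = ωn⁻¹ :=
    eq_inv_of_mul_eq_one_left (by rw [← pow_succ, Nat.sub_add_cancel hn, hωn.pow_eq_one])
  refine Units.ext ?_
  simp only [Units.val_mul, Units.val_pow_eq_pow_val, hg, hh,
    Matrix.fin_two_diagonal_pow, inv_pow, hinv, inv_inv, Matrix.mul_fin_two]
  simp [mul_comm]

theorem disjoint_zpowers_of_coe_eq_diag_antidiag (hn : 0 < n) (hk : 0 < k) (hcop : n.Coprime k)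
    (hωn : IsPrimitiveRoot ωn n) (hω2k : IsPrimitiveRoot ω2k (2 * k))
    (hg : (g : Matrix (Fin 2) (Fin 2) K) = !![ωn, 0; 0, ωn⁻¹])
    (hh : (h : Matrix (Fin 2) (Fin 2) K) = !![0, ω2k; ω2k, 0]) :
    Disjoint (Subgroup.zpowers g) (Subgroup.zpowers h) := by
  have hg_ord := orderOf_of_coe_eq_diag hωn hg
  have hh_ord := orderOf_of_coe_eq_antidiag hω2k hh
  rw [Subgroup.disjoint_def]
  intro z hzg hzh
  obtain ⟨a, rfl⟩ := (orderOf_pos_iff.1 (hg_ord ▸ hn)).mem_powers_iff_mem_zpowers.2 hzg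
  obtain ⟨b, hb⟩ := (orderOf_pos_iff.1 (by omega)).mem_powers_iff_mem_zpowers.2 hzh
  have hentry (i j : Fin 2) := Matrix.ext_iff.2 (congrArg Units.val hb) i j
  simp only [Units.val_pow_eq_pow_val, hg, hh, Matrix.fin_two_diagonal_pow] at hentry
  obtain ⟨c, rfl | rfl⟩ := Nat.even_or_odd' b
  · have h00 : ω2k ^ (2 * c) = ωn ^ a := by
      simpa [Matrix.fin_two_antidiagonal_pow_two_mul] using hentry 0 0
    have hone : ωn ^ a = 1 := by
      rw [← pow_one (ωn ^ a), ← hcop, pow_gcd_eq_one]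
      constructor
      · rw [← pow_mul, mul_comm, pow_mul, hωn.pow_eq_one, one_pow]
      · rw [← h00, ← pow_mul, mul_right_comm, pow_mul, hω2k.pow_eq_one, one_pow]
    exact orderOf_dvd_iff_pow_eq_one.1 (hg_ord ▸ (hωn.pow_eq_one_iff_dvd a).1 hone)
  · have h01 := hentry 0 1
    simp [Matrix.fin_two_antidiagonal_pow_two_mul_add_one, hω2k.ne_zero (by omega)] at h01

end DiagonalAntidiagonal

namespace PresentedGroup

theorem range_toGroup {α G : Type*} [Group G] {rels : Set (FreeGroup α)} {f : α → G}
    (hf : ∀ r ∈ rels, FreeGroup.lift f r = 1) :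
    (toGroup hf).range = Subgroup.closure (Set.range f) := by
  rw [MonoidHom.range_eq_map, ← closure_range_of, MonoidHom.map_closure, ← Set.range_comp]
  congr 2
  ext x
  exact toGroup.of hf

end PresentedGroup

def metacyclicRels (n m r : ℕ) : Set (FreeGroup (Fin 2)) :=
  {FreeGroup.of 0 ^ n, FreeGroup.of 1 ^ m,
    FreeGroup.of 1 * FreeGroup.of 0 * (FreeGroup.of 0 ^ r * FreeGroup.of 1)⁻¹}

namespace metacyclicRels

variable {n m r : ℕ}

theorem lift_eq_one {G : Type*} [Group G] {x y : G} (hx : x ^ n = 1) (hy : y ^ m = 1)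
    (hyx : SemiconjBy y x (x ^ r)) : ∀ ρ ∈ metacyclicRels n m r, FreeGroup.lift ![x, y] ρ = 1 := by
  rintro ρ (rfl | rfl | rfl) <;> simp [hx, hy, hyx.eq]

theorem surjective_pow_mul_pow (hn : 0 < n) (hm : 0 < m) :
    Function.Surjective fun p : Fin n × Fin m =>
      (PresentedGroup.of 0 : PresentedGroup (metacyclicRels n m r)) ^ (p.1 : ℕ) *
        PresentedGroup.of 1 ^ (p.2 : ℕ) := by
  have hrel {ρ : FreeGroup (Fin 2)} (hρ : ρ ∈ metacyclicRels n m r) :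
      PresentedGroup.mk _ ρ = 1 := PresentedGroup.one_of_mem hρ
  have hx := hrel (Or.inl rfl)
  have hy := hrel (Or.inr (Or.inl rfl))
  have hyx := hrel (Or.inr (Or.inr rfl))
  simp only [map_pow, map_mul, map_inv, mul_inv_eq_one] at hx hy hyx
  have htop : Subgroup.closure {PresentedGroup.of 0, PresentedGroup.of 1} =
      (⊤ : Subgroup (PresentedGroup (metacyclicRels n m r))) := by
    rw [← Matrix.range_cons_cons_empty _ _ ![], ← PresentedGroup.closure_range_of]
    congr 2
    ext i
    fin_cases i <;> rfl
  intro z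
  obtain ⟨a, ha, b, hb, rfl⟩ :=
    Subgroup.exists_pow_mul_pow_of_mem_closure_pair hn hm hx hy hyx (htop ▸ Subgroup.mem_top z)
  exact ⟨(⟨a, ha⟩, ⟨b, hb⟩), rfl⟩

end metacyclicRels

theorem Gnk_card_and_presentation_general {K : Type*} [Field K]
    (n k : ℕ) (hn : 0 < n) (hk : 0 < k) (hcop : Nat.Coprime n k)
    (ωn ω2k : K) (hωn : IsPrimitiveRoot ωn n) (hω2k : IsPrimitiveRoot ω2k (2 * k))
    (g h : (Matrix (Fin 2) (Fin 2) K)ˣ)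
    (hg : (↑g : Matrix (Fin 2) (Fin 2) K) = !![ωn, 0; 0, ωn⁻¹])
    (hh : (↑h : Matrix (Fin 2) (Fin 2) K) = !![0, ω2k; ω2k, 0]) :
    Nat.card (Subgroup.closure {g, h} : Subgroup (Matrix (Fin 2) (Fin 2) K)ˣ) = 2 * n * k ∧
    g ^ n = 1 ∧ h ^ (2 * k) = 1 ∧ h * g = g ^ (n - 1) * h ∧
    ∃ φ : PresentedGroup
        ({FreeGroup.of 0 ^ n, FreeGroup.of 1 ^ (2 * k),
          FreeGroup.of 1 * FreeGroup.of 0 * (FreeGroup.of 0 ^ (n - 1) * FreeGroup.of 1)⁻¹} :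
          Set (FreeGroup (Fin 2))) ≃*
        (Subgroup.closure {g, h} : Subgroup (Matrix (Fin 2) (Fin 2) K)ˣ),
      (↑(φ (PresentedGroup.of 0)) = g ∧ ↑(φ (PresentedGroup.of 1)) = h) := by
  have hg_ord := orderOf_of_coe_eq_diag hωn hg
  have hh_ord := orderOf_of_coe_eq_antidiag hω2k hh
  have hgn : g ^ n = 1 := hg_ord ▸ pow_orderOf_eq_one g
  have hh2k : h ^ (2 * k) = 1 := hh_ord ▸ pow_orderOf_eq_one h
  have hhg := semiconjBy_of_coe_eq_antidiag_diag hn hωn hg hh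
  let ψ := PresentedGroup.toGroup (metacyclicRels.lift_eq_one hgn hh2k hhg)
  have hψ_of (i : Fin 2) : ψ (PresentedGroup.of i) = ![g, h] i := PresentedGroup.toGroup.of _
  have hwords := metacyclicRels.surjective_pow_mul_pow (r := n - 1) hn (by omega : 0 < 2 * k)
  have hψ_words : Function.Injective (ψ ∘ fun p : Fin n × Fin (2 * k) =>
      PresentedGroup.of 0 ^ (p.1 : ℕ) * PresentedGroup.of 1 ^ (p.2 : ℕ)) := by
    simpa [Function.comp_def, hψ_of] using Subgroup.injective_pow_mul_pow_of_disjoint hg_ord hh_ord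
      (disjoint_zpowers_of_coe_eq_diag_antidiag hn hk hcop hωn hω2k hg hh)
  have hψ_inj : Function.Injective ψ := hψ_words.of_comp_right hwords
  have hrange : ψ.range = Subgroup.closure {g, h} := by
    rw [PresentedGroup.range_toGroup, Matrix.range_cons_cons_empty]
  let φ := (MonoidHom.ofInjective hψ_inj).trans (MulEquiv.subgroupCongr hrange)
  refine ⟨?_, hgn, hh2k, hhg, φ, hψ_of 0, hψ_of 1⟩
  rw [← Nat.card_congr φ.toEquiv, ← Nat.card_eq_of_bijective _ ⟨hψ_words.of_comp, hwords⟩,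
    Nat.card_prod, Nat.card_fin, Nat.card_fin]
  ring

/-- Let `n, k` be coprime positive integers with `k ≢ 2 (mod 4)`, and let
`G = G_{n,k} = ⟨g, h⟩ ≤ GL₂` with `g = diag(ω_n, ω_n⁻¹)`, `h = antidiag(ω_{2k}, ω_{2k})`,
where `ω_m` is a primitive `m`-th root of unity. Then `|G| = 2nk`, and `G` has the
presentation `⟨g, h ∣ gⁿ = 1, h^{2k} = 1, hg = g^{n-1}h⟩`. -/
theorem Gnk_card_and_presentation {K : Type*} [Field K] [IsAlgClosed K] [CharZero K]
    (n k : ℕ) (hn : 0 < n) (hk : 0 < k) (hcop : Nat.Coprime n k) (hk4 : k % 4 ≠ 2)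
    (ωn ω2k : K) (hωn : IsPrimitiveRoot ωn n) (hω2k : IsPrimitiveRoot ω2k (2 * k))
    (g h : (Matrix (Fin 2) (Fin 2) K)ˣ)
    (hg : (↑g : Matrix (Fin 2) (Fin 2) K) = !![ωn, 0; 0, ωn⁻¹])
    (hh : (↑h : Matrix (Fin 2) (Fin 2) K) = !![0, ω2k; ω2k, 0]) :
    Nat.card (Subgroup.closure {g, h} : Subgroup (Matrix (Fin 2) (Fin 2) K)ˣ) = 2 * n * k ∧
    g ^ n = 1 ∧ h ^ (2 * k) = 1 ∧ h * g = g ^ (n - 1) * h ∧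
    ∃ φ : PresentedGroup
        ({FreeGroup.of 0 ^ n, FreeGroup.of 1 ^ (2 * k),
          FreeGroup.of 1 * FreeGroup.of 0 * (FreeGroup.of 0 ^ (n - 1) * FreeGroup.of 1)⁻¹} :
          Set (FreeGroup (Fin 2))) ≃*
        (Subgroup.closure {g, h} : Subgroup (Matrix (Fin 2) (Fin 2) K)ˣ),
      (↑(φ (PresentedGroup.of 0)) = g ∧ ↑(φ (PresentedGroup.of 1)) = h) :=
  Gnk_card_and_presentation_general n k hn hk hcop ωn ω2k hωn hω2k g h hg hh
end

section
/- Let n, k be odd coprime positive integers with n > k, and let [γ₁,…,γ_{d-1}] be the Hirzebruch-Jung continued fraction expansion of 2n/(n+k). Define β₃ = γ₃+1 and βᵢ = γᵢ otherwise; set s₁ = s₂ = 1, t₁ = 2β₂+1, t₂ = 2β₂-1, with sᵢ = βᵢ s_{i-1} - s_{i-2} and tᵢ = βᵢ t_{i-1} - t_{i-2} for 3 ≤ i ≤ d-1, and rᵢ = (k·tᵢ - n·sᵢ)/2. Then r_i·s_{i+1} - r_{i+1}·s_i = k and r_i·t_{i+1} - r_{i+1}·t_i = n for all 1 ≤ i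 ≤ d-2. -/
/-- Evaluation of a Hirzebruch–Jung continued fraction `[a₁, …, a_m]`, i.e.
`a₁ - 1/(a₂ - 1/(⋯ - 1/a_m))`. (Note `1/0 = 0` in `ℚ`, so `hjEval [a] = a`.) -/
def hjEval : List ℤ → ℚ
  | [] => 0
  | a :: l => (a : ℚ) - 1 / hjEval l

/-- Let `n > k` be odd coprime positive integers and `[γ₁, …, γ_{d-1}]` the
Hirzebruch–Jung continued fraction expansion of `2n/(n+k)`. With `β₃ = γ₃ + 1`,
`βᵢ = γᵢ` otherwise, `s₁ = s₂ = 1`, `t₁ = 2β₂+1`, `t₂ = 2β₂-1`,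
`sᵢ = βᵢ s_{i-1} - s_{i-2}`, `tᵢ = βᵢ t_{i-1} - t_{i-2}` for `3 ≤ i ≤ d-1` and
`rᵢ = (k tᵢ - n sᵢ)/2`, one has `rᵢ s_{i+1} - r_{i+1} sᵢ = k` and
`rᵢ t_{i+1} - r_{i+1} tᵢ = n` for `1 ≤ i ≤ d-2`. -/
theorem hj_series_determinant_identities (n k : ℕ) (hn : Odd n) (hk : Odd k)
    (hcop : Nat.Coprime n k) (hkn : k < n) (hk0 : 0 < k)
    (d : ℕ) (hd : 2 ≤ d) (γ : ℕ → ℤ)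
    (hγval : hjEval ((List.range (d - 1)).map (fun i => γ (i + 1))) = (2 * n : ℚ) / (n + k))
    (hγ1 : 1 ≤ γ 1) (hγi : ∀ i, 2 ≤ i → i ≤ d - 1 → 2 ≤ γ i)
    (β s t r : ℕ → ℤ)
    (hβ : ∀ i, β i = if i = 3 then γ 3 + 1 else γ i)
    (hs1 : s 1 = 1) (hs2 : s 2 = 1)
    (ht1 : t 1 = 2 * β 2 + 1) (ht2 : t 2 = 2 * β 2 - 1)
    (hsrec : ∀ i, 3 ≤ i → i ≤ d - 1 → s i = β i * s (i - 1) - s (i - 2))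
    (htrec : ∀ i, 3 ≤ i → i ≤ d - 1 → t i = β i * t (i - 1) - t (i - 2))
    (hr : ∀ i, 1 ≤ i → i ≤ d - 1 → 2 * r i = k * t i - n * s i) :
    ∀ i, 1 ≤ i → i ≤ d - 2 →
      r i * s (i + 1) - r (i + 1) * s i = k ∧
      r i * t (i + 1) - r (i + 1) * t i = n := by
  have hD : ∀ i, 1 ≤ i → i ≤ d - 2 → s (i + 1) * t i - s i * t (i + 1) = 2 := by
    intro i
    induction i with
    | zero => omega
    | succ j ih =>
      intro h1 h2
      rcases Nat.eq_or_lt_of_le h1 with h | h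
      · have hj : j = 0 := by omega
        subst hj
        rw [hs2, ht1, ht2, hs1]; ring
      · have hj1 : 1 ≤ j := by omega
        have hj2 : j ≤ d - 2 := by omega
        have h3 : 3 ≤ j + 2 := by omega
        have h4 : j + 2 ≤ d - 1 := by omega
        have hsr := hsrec (j + 2) h3 h4
        have htr := htrec (j + 2) h3 h4
        simp only [show j + 2 - 1 = j + 1 from rfl, show j + 2 - 2 = j from rfl] at hsr htr
        have hih := ih hj1 hj2
        calc s (j + 1 + 1) * t (j + 1) - s (j + 1) * t (j + 1 + 1)
            = (β (j + 2) * s (j + 1) - s j) * t (j + 1)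
              - s (j + 1) * (β (j + 2) * t (j + 1) - t j) := by rw [← hsr, ← htr]
          _ = s (j + 1) * t j - s j * t (j + 1) := by ring
          _ = 2 := hih
  intro i h1 h2
  have H1 := hr i h1 (by omega)
  have H2 := hr (i + 1) (by omega) (by omega)
  have hDi := hD i h1 h2
  constructor
  · have h : 2 * (r i * s (i + 1) - r (i + 1) * s i) = 2 * k := by
      linear_combination s (i + 1) * H1 - s i * H2 + (k : ℤ) * hDi
    linarith
  · have h : 2 * (r i * t (i + 1) - r (i + 1) * t i) = 2 * n := by
      linear_combination t (i + 1) * H1 - t i * H2 + (n : ℤ) * hDi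
    linarith
end

section
/- Let n, k be odd coprime positive integers with n > k, and define rᵢ, sᵢ, tᵢ (1 ≤ i ≤ d-1) as the Riemenschneider-type series from the Hirzebruch-Jung expansion of 2n/(n+k), so that r₁ > r₂ > ⋯ > r_{d-1} = 0 and 2rᵢ + n·sᵢ = k·tᵢ for all i. Then for every triple of integers (r,s,t) with 2r + ns = kt, 0 ≤ r < 2k and s,t ≥ 1, there exist non-negative integers c₁,…,c_{d-1} such that r = Σ cᵢrᵢ, s = Σ cᵢsᵢ, and t = Σ cᵢtᵢ. -/
def hjContinuant : List ℤ → ℤ × ℤ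
  | [] => (1, 0)
  | a :: l => (a * (hjContinuant l).1 - (hjContinuant l).2, (hjContinuant l).1)

theorem hjContinuant_append_pair (l : List ℤ) (a b : ℤ) :
    hjContinuant (l ++ [a, b]) = b • hjContinuant (l ++ [a]) - hjContinuant l := by
  induction l with
  | nil => simp [hjContinuant, mul_comm]
  | cons c l ih =>
    simp only [List.cons_append, hjContinuant, ih]
    ext <;> simp only [Prod.fst_sub, Prod.snd_sub, Prod.smul_fst, Prod.smul_snd, smul_eq_mul]; ring

theorem hjContinuant_snd_mem_Ico {l : List ℤ} (hl : ∀ a ∈ l, 2 ≤ a) :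
    (hjContinuant l).2 ∈ Set.Ico 0 (hjContinuant l).1 := by
  induction l with
  | nil => simp [hjContinuant]
  | cons a l ih =>
    obtain ⟨h0, h1⟩ := ih fun b hb => hl b (List.mem_cons_of_mem a hb)
    have ha : 2 ≤ a := hl a List.mem_cons_self
    constructor <;> simp only [hjContinuant] <;> nlinarith

theorem hjEval_eq_div {l : List ℤ} (hl : ∀ a ∈ l, 2 ≤ a) :
    hjEval l = (hjContinuant l).1 / (hjContinuant l).2 := by
  induction l with
  | nil => simp [hjEval, hjContinuant]
  | cons a l ih =>
    have hl' : ∀ b ∈ l, 2 ≤ b := fun b hb => hl b (List.mem_cons_of_mem a hb)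
    obtain ⟨h0, h1⟩ := hjContinuant_snd_mem_Ico hl'
    have hN : ((hjContinuant l).1 : ℚ) ≠ 0 := by exact_mod_cast (by omega : (hjContinuant l).1 ≠ 0)
    rw [hjEval, ih hl', hjContinuant]
    push_cast
    field_simp

theorem hjEval_nonneg {l : List ℤ} (hl : ∀ a ∈ l, 2 ≤ a) : 0 ≤ hjEval l := by
  obtain ⟨h0, h1⟩ := hjContinuant_snd_mem_Ico hl
  rw [hjEval_eq_div hl]
  have hN : (0 : ℤ) ≤ (hjContinuant l).1 := by omega
  exact div_nonneg (by exact_mod_cast hN) (by exact_mod_cast h0)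

theorem one_lt_hjEval {l : List ℤ} (hne : l ≠ []) (hl : ∀ a ∈ l, 2 ≤ a) : 1 < hjEval l := by
  obtain ⟨a, l, rfl⟩ := List.exists_cons_of_ne_nil hne
  obtain ⟨-, h1⟩ := hjContinuant_snd_mem_Ico hl
  obtain ⟨h0', h1'⟩ := hjContinuant_snd_mem_Ico fun b hb => hl b (List.mem_cons_of_mem a hb)
  rw [hjEval_eq_div hl, one_lt_div (by simp only [hjContinuant]; exact_mod_cast (by omega))]
  exact_mod_cast h1

theorem hjEval_cons_le (a : ℤ) {l : List ℤ} (hl : ∀ b ∈ l, 2 ≤ b) : hjEval (a :: l) ≤ a := by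
  have := hjEval_nonneg hl
  rw [hjEval]
  linarith [one_div_nonneg.mpr this]

theorem hjContinuant_fst_mul_eq_mul_snd {l : List ℤ} (hl : ∀ a ∈ l, 2 ≤ a) {p q : ℤ}
    (hp : p ≠ 0) (hq : q ≠ 0) (hv : hjEval l = p / q) :
    (hjContinuant l).1 * q = p * (hjContinuant l).2 := by
  rw [hjEval_eq_div hl] at hv
  have hD : ((hjContinuant l).2 : ℚ) ≠ 0 := by
    intro h
    rw [h, div_zero, eq_comm, div_eq_zero_iff] at hv
    simp [hp, hq] at hv
  rw [div_eq_div_iff hD (by exact_mod_cast hq)] at hv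
  exact_mod_cast hv

def cfPrefix (γ : ℕ → ℤ) (m : ℕ) : List ℤ := (List.range m).map fun i => γ (i + 1)

theorem mem_cfPrefix {γ : ℕ → ℤ} {m : ℕ} {a : ℤ} :
    a ∈ cfPrefix γ m ↔ ∃ i, 1 ≤ i ∧ i ≤ m ∧ γ i = a := by
  simp only [cfPrefix, List.mem_map, List.mem_range]
  constructor
  · rintro ⟨i, hi, rfl⟩; exact ⟨i + 1, by omega, by omega, rfl⟩
  · rintro ⟨i, h1, h2, rfl⟩; exact ⟨i - 1, by omega, by rw [Nat.sub_add_cancel h1]⟩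

theorem cfPrefix_zero (γ : ℕ → ℤ) : cfPrefix γ 0 = [] := rfl

theorem cfPrefix_succ (γ : ℕ → ℤ) (m : ℕ) : cfPrefix γ (m + 1) = cfPrefix γ m ++ [γ (m + 1)] := by
  simp [cfPrefix, List.range_succ]

theorem cfPrefix_succ' (γ : ℕ → ℤ) (m : ℕ) :
    cfPrefix γ (m + 1) = γ 1 :: cfPrefix (fun i => γ (i + 1)) m := by
  simp [cfPrefix, List.range_succ_eq_map]

theorem hjContinuant_cfPrefix_add_two (γ : ℕ → ℤ) (i : ℕ) :
    hjContinuant (cfPrefix γ (i + 2)) =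
      γ (i + 2) • hjContinuant (cfPrefix γ (i + 1)) - hjContinuant (cfPrefix γ i) := by
  rw [cfPrefix_succ, cfPrefix_succ, List.append_assoc, List.singleton_append,
    hjContinuant_append_pair]

theorem cfPrefix_head_eq_two {γ : ℕ → ℤ} {m : ℕ} {v : ℚ} (hv : hjEval (cfPrefix γ m) = v)
    (h1v : 1 < v) (hv2 : v < 2) (hγ : ∀ i, 2 ≤ i → i ≤ m → 2 ≤ γ i) :
    2 ≤ m ∧ γ 1 = 2 ∧ 1 ≤ (2 - v) * γ 2 := by
  rcases m with _ | _ | m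
  · simp only [cfPrefix_zero, hjEval] at hv
    linarith
  · simp only [cfPrefix_succ', cfPrefix_zero, hjEval, div_zero, sub_zero] at hv
    have : (1 : ℚ) < γ 1 ∧ (γ 1 : ℚ) < 2 := ⟨by linarith, by linarith⟩
    have : 1 < γ 1 ∧ γ 1 < 2 := by exact_mod_cast this
    omega
  · rw [cfPrefix_succ', cfPrefix_succ', hjEval] at hv
    have htail : ∀ a ∈ cfPrefix (fun i => γ (i + 1 + 1)) m, 2 ≤ a := by
      intro a ha
      obtain ⟨i, hi, him, rfl⟩ := mem_cfPrefix.mp ha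
      exact hγ _ (by omega) (by omega)
    set x := hjEval (γ (1 + 1) :: cfPrefix (fun i => γ (i + 1 + 1)) m)
    have hx1 : 1 < x := one_lt_hjEval (List.cons_ne_nil _ _) fun a ha => by
      rcases List.mem_cons.mp ha with rfl | ha
      · exact hγ 2 le_rfl (by omega)
      · exact htail a ha
    have hxγ : x ≤ γ 2 := hjEval_cons_le _ htail
    have hinv : 0 < 1 / x ∧ 1 / x < 1 := ⟨by positivity, (div_lt_one (by linarith)).mpr hx1⟩
    have hγ1 : γ 1 = 2 := by
      have : (1 : ℚ) < γ 1 ∧ (γ 1 : ℚ) < 3 := ⟨by linarith, by linarith⟩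
      have : 1 < γ 1 ∧ γ 1 < 3 := by exact_mod_cast this
      omega
    refine ⟨by omega, hγ1, ?_⟩
    rw [← hv, hγ1]
    calc (1 : ℚ) = 1 / x * x := by field_simp
      _ ≤ 1 / x * γ 2 := by gcongr
      _ = _ := by push_cast; ring

theorem hjExpansion_two_mul_div_add {n k : ℕ} (hk : 0 < k) (hkn : k < n) {γ : ℕ → ℤ} {m : ℕ}
    (hv : hjEval (cfPrefix γ m) = (2 * n : ℚ) / (n + k)) (hγ : ∀ i, 2 ≤ i → i ≤ m → 2 ≤ γ i) :
    2 ≤ m ∧ γ 1 = 2 ∧ (n + k : ℤ) ≤ 2 * k * γ 2 ∧ 0 < (hjContinuant (cfPrefix γ m)).1 ∧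
      (hjContinuant (cfPrefix γ m)).1 * (n + k) = 2 * n * (hjContinuant (cfPrefix γ m)).2 := by
  have hnk : (0 : ℚ) < n + k := by positivity
  have hkn' : (k : ℚ) < n := by exact_mod_cast hkn
  have hk' : (0 : ℚ) < k := by exact_mod_cast hk
  obtain ⟨hm, hγ1, hγ2⟩ := cfPrefix_head_eq_two hv
    (by rw [lt_div_iff₀ hnk]; linarith) (by rw [div_lt_iff₀ hnk]; linarith) hγ
  have hall : ∀ a ∈ cfPrefix γ m, 2 ≤ a := by
    intro a ha
    obtain ⟨i, hi, him, rfl⟩ := mem_cfPrefix.mp ha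
    obtain rfl | hi2 := eq_or_lt_of_le hi
    · exact hγ1.ge
    · exact hγ i hi2 him
  refine ⟨hm, hγ1, ?_, ?_, ?_⟩
  · rw [show (2 : ℚ) - 2 * n / (n + k) = 2 * k / (n + k) by field_simp; ring, div_mul_eq_mul_div,
      one_le_div hnk] at hγ2
    exact_mod_cast hγ2
  · obtain ⟨h0, h1⟩ := hjContinuant_snd_mem_Ico hall
    omega
  · exact hjContinuant_fst_mul_eq_mul_snd hall (by omega) (by omega) (by push_cast; exact hv)

def ContinuantRec {R : Type*} [Ring R] (c u : ℕ → R) (lo hi : ℕ) : Prop :=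
  ∀ i, lo ≤ i → i ≤ hi → u i = c i * u (i - 1) - u (i - 2)

namespace ContinuantRec

variable {R : Type*} {c u v : ℕ → R} {a b : ℕ}

theorem eq_of_initial [Ring R] (hu : ContinuantRec c u (a + 2) b)
    (hv : ContinuantRec c v (a + 2) b)
    (h₀ : u a = v a) (h₁ : a + 1 ≤ b → u (a + 1) = v (a + 1)) :
    ∀ i, a ≤ i → i ≤ b → u i = v i := by
  intro i
  induction i using Nat.strong_induction_on with
  | _ i ih =>
    intro hai hib
    obtain rfl | rfl | hi : i = a ∨ i = a + 1 ∨ a + 2 ≤ i := by omega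
    · exact h₀
    · exact h₁ hib
    · rw [hu i hi hib, hv i hi hib, ih (i - 1) (by omega) (by omega) (by omega),
        ih (i - 2) (by omega) (by omega) (by omega)]

theorem casoratian_eq [CommRing R] (hu : ContinuantRec c u (a + 2) b)
    (hv : ContinuantRec c v (a + 2) b) :
    ∀ i, a ≤ i → i < b → u i * v (i + 1) - v i * u (i + 1) = u a * v (a + 1) - v a * u (a + 1) := by
  intro i hai
  induction i, hai using Nat.le_induction with
  | base => intro; rfl
  | succ i hai ih =>
    intro hib
    rw [← ih (by omega), hu (i + 2) (by omega) hib, hv (i + 2) (by omega) hib,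
      show i + 2 - 1 = i + 1 by omega, show i + 2 - 2 = i by omega]
    ring

end ContinuantRec

theorem continuantRec_hjContinuant (γ : ℕ → ℤ) {lo : ℕ} (hlo : 2 ≤ lo) (hi : ℕ) :
    ContinuantRec γ (fun i => (hjContinuant (cfPrefix γ i)).1) lo hi ∧
      ContinuantRec γ (fun i => (hjContinuant (cfPrefix γ i)).2) lo hi := by
  constructor <;>
  · intro i hi _
    obtain ⟨j, rfl⟩ := Nat.exists_eq_add_of_le' (hlo.trans hi)
    simp [hjContinuant_cfPrefix_add_two]

/- The shift `β₃ = γ₃ + 1` absorbs `t₁ = 2γ₂ + 1 ≠ 2 = N₁`, so `t` and the numerators agree from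
index 2 on, although not at index 1. -/
theorem riemenschneider_eq_hjContinuant {γ β s t : ℕ → ℤ} {m : ℕ} (hγ1 : γ 1 = 2)
    (hβ : ∀ i, β i = if i = 3 then γ 3 + 1 else γ i)
    (hs1 : s 1 = 1) (hs2 : s 2 = 1) (ht1 : t 1 = 2 * β 2 + 1) (ht2 : t 2 = 2 * β 2 - 1)
    (hsrec : ContinuantRec β s 3 m) (htrec : ContinuantRec β t 3 m) :
    ∀ i, 2 ≤ i → i ≤ m →
      t i = (hjContinuant (cfPrefix γ i)).1 ∧
        s i = 2 * (hjContinuant (cfPrefix γ i)).2 - (hjContinuant (cfPrefix γ i)).1 := by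
  obtain ⟨hN, hD⟩ := continuantRec_hjContinuant γ (lo := 2 + 2) (by norm_num) m
  have hβγ {u : ℕ → ℤ} (hu : ContinuantRec β u 3 m) : ContinuantRec γ u (2 + 2) m :=
    fun i hi him => by rw [hu i (by omega) him, hβ, if_neg (by omega)]
  have hM : ContinuantRec γ
      (fun i => 2 * (hjContinuant (cfPrefix γ i)).2 - (hjContinuant (cfPrefix γ i)).1) (2 + 2) m :=
    fun i hi him => by linear_combination 2 * hD i hi him - hN i hi him
  have hβ2 : β 2 = γ 2 := by simp [hβ]
  have hC2 : hjContinuant (cfPrefix γ 2) = (2 * γ 2 - 1, γ 2) := by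
    simp [cfPrefix, List.range_succ, hjContinuant, hγ1]
  have hC3 : hjContinuant (cfPrefix γ 3) = (γ 3 * (2 * γ 2 - 1) - 2, γ 3 * γ 2 - 1) := by
    simp [cfPrefix, hjContinuant, hγ1, List.range_succ]
    constructor <;> ring
  intro i hi him
  constructor
  · refine (hβγ htrec).eq_of_initial hN ?_ ?_ i hi him
    · rw [ht2, hβ2, hC2]
    · intro h3
      rw [htrec 3 le_rfl h3, hC3, hβ, if_pos rfl, ht2, ht1, hβ2]
      ring
  · refine (hβγ hsrec).eq_of_initial hM ?_ ?_ i hi him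
    · rw [hs2, hC2]; ring
    · intro h3
      rw [hsrec 3 le_rfl h3, hC3, hβ, if_pos rfl, hs2, hs1]
      ring

theorem exists_consecutive_le_le {α : Type*} [LinearOrder α] (f : ℕ → α) (c : α) {a b : ℕ}
    (hab : a < b) (ha : c ≤ f a) (hb : f b ≤ c) :
    ∃ g, a ≤ g ∧ g < b ∧ c ≤ f g ∧ f (g + 1) ≤ c := by
  induction b, hab using Nat.le_induction with
  | base => exact ⟨a, le_rfl, lt_add_one a, ha, hb⟩
  | succ b hab ih =>
    rcases le_total (f b) c with hfb | hfb
    · obtain ⟨g, hag, hgb, hg⟩ := ih hfb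
      exact ⟨g, hag, hgb.trans (lt_add_one b), hg⟩
    · exact ⟨b, by omega, lt_add_one b, hfb, hb⟩

theorem sum_single_add_single_mul {s : Finset ℕ} {i j : ℕ} (hi : i ∈ s) (hj : j ∈ s) (x y : ℕ)
    (f : ℕ → ℤ) :
    ∑ l ∈ s, ((Pi.single i x + Pi.single j y : ℕ → ℕ) l : ℤ) * f l = x * f i + y * f j := by
  simp [Pi.single_apply, add_mul, Finset.sum_add_distrib, hi, hj]

theorem even_mul_sub_mul_of_odd {n k r s t R S T : ℤ} (hn : Odd n) (hk : Odd k)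
    (hrst : 2 * r + n * s = k * t) (hRST : 2 * R + n * S = k * T) : Even (S * t - T * s) := by
  obtain ⟨a, rfl⟩ := hn
  obtain ⟨b, rfl⟩ := hk
  exact ⟨S * (r + a * s - b * t) - s * (R + a * S - b * T),
    by linear_combination s * hRST - S * hrst⟩

theorem exists_nonneg_combination_consecutive {s t : ℕ → ℤ} {m : ℕ} {S T : ℤ}
    (hcross : ∀ i, 1 ≤ i → i < m → t i * s (i + 1) - s i * t (i + 1) = 2)
    (heven : ∀ i, 1 ≤ i → i ≤ m → Even (S * t i - T * s i)) (hm : 1 < m)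
    (hfirst : 0 ≤ S * t 1 - T * s 1) (hlast : S * t m - T * s m ≤ 0) :
    ∃ g, 1 ≤ g ∧ g < m ∧ ∃ x y : ℕ,
      S = x * s g + y * s (g + 1) ∧ T = x * t g + y * t (g + 1) := by
  obtain ⟨g, hg1, hgm, hg, hg'⟩ :=
    exists_consecutive_le_le (fun i => S * t i - T * s i) 0 hm hfirst hlast
  obtain ⟨y, hy⟩ := heven g hg1 hgm.le
  obtain ⟨x, hx⟩ := heven (g + 1) (by omega) hgm
  have hc := hcross g hg1 hgm
  refine ⟨g, hg1, hgm, (-x).toNat, y.toNat, ?_, ?_⟩ <;>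
    rw [Int.toNat_of_nonneg (by omega), Int.toNat_of_nonneg (by omega)]
  · have : 2 * S = 2 * (-x * s g + y * s (g + 1)) := by
      linear_combination (-S) * hc - s g * hx + s (g + 1) * hy
    omega
  · have : 2 * T = 2 * (-x * t g + y * t (g + 1)) := by
      linear_combination (-T) * hc - t g * hx + t (g + 1) * hy
    omega

theorem exists_decomposition_of_sign_change {n k : ℤ} (hn : Odd n) (hk : Odd k)
    {r s t : ℕ → ℤ} {m : ℕ} {R S T : ℤ} (hm : 1 < m)
    (hrst : ∀ i, 1 ≤ i → i ≤ m → 2 * r i + n * s i = k * t i) (hRST : 2 * R + n * S = k * T)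
    (hcross : ∀ i, 1 ≤ i → i < m → t i * s (i + 1) - s i * t (i + 1) = 2)
    (hfirst : 0 ≤ S * t 1 - T * s 1) (hlast : S * t m - T * s m ≤ 0) :
    ∃ c : ℕ → ℕ,
      R = ∑ i ∈ Finset.Icc 1 m, (c i : ℤ) * r i ∧
      S = ∑ i ∈ Finset.Icc 1 m, (c i : ℤ) * s i ∧
      T = ∑ i ∈ Finset.Icc 1 m, (c i : ℤ) * t i := by
  obtain ⟨g, hg1, hgm, x, y, hSg, hTg⟩ := exists_nonneg_combination_consecutive hcross
    (fun i h1 h2 => even_mul_sub_mul_of_odd hn hk (hrst i h1 h2) hRST) hm hfirst hlast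
  have hmem : g ∈ Finset.Icc 1 m ∧ g + 1 ∈ Finset.Icc 1 m := by
    simp only [Finset.mem_Icc]; omega
  refine ⟨Pi.single g x + Pi.single (g + 1) y, ?_, ?_, ?_⟩ <;>
    rw [sum_single_add_single_mul hmem.1 hmem.2]
  · have : 2 * R = 2 * (x * r g + y * r (g + 1)) := by
      linear_combination hRST - n * hSg + k * hTg - x * hrst g hg1 hgm.le
        - y * hrst (g + 1) (by omega) hgm
    omega
  · exact hSg
  · exact hTg

theorem mul_sub_nonneg_of_lt_two_mul {n k t R S T : ℤ} (hk : 0 < k) (hkt : n + 2 * k ≤ k * t)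
    (hRST : 2 * R + n * S = k * T) (hR : R < 2 * k) (hS : 1 ≤ S) (heven : Even (S * t - T)) :
    0 ≤ S * t - T := by
  have hkey : k * (S * t - T) = S * (k * t - n) - 2 * R := by linear_combination hRST
  by_contra hneg
  obtain ⟨w, hw⟩ := heven
  have : S * t - T ≤ -2 := by omega
  nlinarith

theorem mul_sub_mul_nonpos_of_mul_eq_mul {n k s t R S T : ℤ} (hn : 0 < n) (hst : n * s = k * t)
    (ht : 0 ≤ t) (hRST : 2 * R + n * S = k * T) (hR : 0 ≤ R) : S * t - T * s ≤ 0 := by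
  have hkey : n * (S * t - T * s) = -2 * R * t := by linear_combination t * hRST - T * hst
  nlinarith

theorem hj_triples_decomposition_general (n k : ℕ) (hn : Odd n) (hk : Odd k)
    (hkn : k < n)
    (d : ℕ) (γ : ℕ → ℤ)
    (hγval : hjEval ((List.range (d - 1)).map (fun i => γ (i + 1))) = (2 * n : ℚ) / (n + k))
    (hγi : ∀ i, 2 ≤ i → i ≤ d - 1 → 2 ≤ γ i)
    (β s t r : ℕ → ℤ)
    (hβ : ∀ i, β i = if i = 3 then γ 3 + 1 else γ i)
    (hs1 : s 1 = 1) (hs2 : s 2 = 1)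
    (ht1 : t 1 = 2 * β 2 + 1) (ht2 : t 2 = 2 * β 2 - 1)
    (hsrec : ∀ i, 3 ≤ i → i ≤ d - 1 → s i = β i * s (i - 1) - s (i - 2))
    (htrec : ∀ i, 3 ≤ i → i ≤ d - 1 → t i = β i * t (i - 1) - t (i - 2))
    (hr : ∀ i, 1 ≤ i → i ≤ d - 1 → 2 * r i = k * t i - n * s i) :
    ∀ R S T : ℤ, 2 * R + n * S = k * T → 0 ≤ R → R < 2 * k → 1 ≤ S → 1 ≤ T →
      ∃ c : ℕ → ℕ,
        R = ∑ i ∈ Finset.Icc 1 (d - 1), (c i : ℤ) * r i ∧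
        S = ∑ i ∈ Finset.Icc 1 (d - 1), (c i : ℤ) * s i ∧
        T = ∑ i ∈ Finset.Icc 1 (d - 1), (c i : ℤ) * t i := by
  intro R S T hRST hR0 hR2k hS _
  obtain ⟨hm, hγ1, hγ2, hNpos, hND⟩ := hjExpansion_two_mul_div_add hk.pos hkn hγval hγi
  obtain ⟨htm, hsm⟩ :=
    riemenschneider_eq_hjContinuant hγ1 hβ hs1 hs2 ht1 ht2 hsrec htrec _ hm le_rfl
  have hn' : Odd (n : ℤ) := by exact_mod_cast hn
  have hk' : Odd (k : ℤ) := by exact_mod_cast hk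
  have hrst i (h1 : 1 ≤ i) (h2 : i ≤ d - 1) : 2 * r i + n * s i = k * t i := by
    linarith [hr i h1 h2]
  have hfirst : 0 ≤ S * t 1 - T * s 1 := by
    have heven := even_mul_sub_mul_of_odd hn' hk' (hrst 1 le_rfl (by omega)) hRST
    rw [hs1, mul_one] at heven ⊢
    refine mul_sub_nonneg_of_lt_two_mul (by exact_mod_cast hk.pos) ?_ hRST hR2k hS heven
    rw [ht1, hβ, if_neg (by norm_num)]
    linarith
  have hlast : S * t (d - 1) - T * s (d - 1) ≤ 0 :=
    mul_sub_mul_nonpos_of_mul_eq_mul (by omega)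
      (by rw [htm, hsm]; linear_combination -hND) (htm ▸ hNpos.le) hRST hR0
  refine exists_decomposition_of_sign_change hn' hk' (by omega) hrst hRST (fun i h1 h2 => ?_)
    hfirst hlast
  rw [ContinuantRec.casoratian_eq (a := 1) htrec hsrec i h1 h2, hs1, hs2, ht1, ht2]
  ring

/-- With the Riemenschneider-type series `rᵢ, sᵢ, tᵢ` (for `1 ≤ i ≤ d-1`) built from the
Hirzebruch–Jung expansion of `2n/(n+k)` (`n > k` odd and coprime), every integer triple
`(r, s, t)` with `2r + ns = kt`, `0 ≤ r < 2k`, `s, t ≥ 1` is a non-negative integral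
combination: `r = Σ cᵢ rᵢ`, `s = Σ cᵢ sᵢ`, `t = Σ cᵢ tᵢ` for some `cᵢ ∈ ℕ`. -/
theorem hj_triples_decomposition (n k : ℕ) (hn : Odd n) (hk : Odd k)
    (hcop : Nat.Coprime n k) (hkn : k < n) (hk0 : 0 < k)
    (d : ℕ) (hd : 2 ≤ d) (γ : ℕ → ℤ)
    (hγval : hjEval ((List.range (d - 1)).map (fun i => γ (i + 1))) = (2 * n : ℚ) / (n + k))
    (hγ1 : 1 ≤ γ 1) (hγi : ∀ i, 2 ≤ i → i ≤ d - 1 → 2 ≤ γ i)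
    (β s t r : ℕ → ℤ)
    (hβ : ∀ i, β i = if i = 3 then γ 3 + 1 else γ i)
    (hs1 : s 1 = 1) (hs2 : s 2 = 1)
    (ht1 : t 1 = 2 * β 2 + 1) (ht2 : t 2 = 2 * β 2 - 1)
    (hsrec : ∀ i, 3 ≤ i → i ≤ d - 1 → s i = β i * s (i - 1) - s (i - 2))
    (htrec : ∀ i, 3 ≤ i → i ≤ d - 1 → t i = β i * t (i - 1) - t (i - 2))
    (hr : ∀ i, 1 ≤ i → i ≤ d - 1 → 2 * r i = k * t i - n * s i) :
    ∀ R S T : ℤ, 2 * R + n * S = k * T → 0 ≤ R → R < 2 * k → 1 ≤ S → 1 ≤ T →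
      ∃ c : ℕ → ℕ,
        R = ∑ i ∈ Finset.Icc 1 (d - 1), (c i : ℤ) * r i ∧
        S = ∑ i ∈ Finset.Icc 1 (d - 1), (c i : ℤ) * s i ∧
        T = ∑ i ∈ Finset.Icc 1 (d - 1), (c i : ℤ) * t i :=
  hj_triples_decomposition_general n k hn hk hkn d γ hγval hγi β s t r hβ hs1 hs2 ht1 ht2 hsrec
    htrec hr
end

section
/- Define S = {(n,k) : gcd(n,k)=1, n ≥ 3, n-k odd, k ≢ 2 mod 4} and T = {(m,q) : 1 < q < m, gcd(m,q)=1}. The maps θ(n,k) = (n + k/2, n) if n is odd, θ(n,k) = (n/2 + k, n/2) if n is even; and η(m,q) = (q, 2(m-q)) if m-q is even, η(m,q) = (2q, m-q) if m-q is odd, are well-defined mutually inverse bijections between S and T. -/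
/-- `S = {(n,k) : gcd(n,k) = 1, n ≥ 3, n - k odd, k ≢ 2 (mod 4)}` (positive integers). -/
def Sset : Set (ℕ × ℕ) :=
  {p | 0 < p.1 ∧ 0 < p.2 ∧ Nat.Coprime p.1 p.2 ∧ 3 ≤ p.1 ∧
    p.1 % 2 ≠ p.2 % 2 ∧ p.2 % 4 ≠ 2}

/-- `T = {(m,q) : 1 < q < m, gcd(m,q) = 1}`. -/
def Tset : Set (ℕ × ℕ) :=
  {p | 1 < p.2 ∧ p.2 < p.1 ∧ Nat.Coprime p.1 p.2}

/-- `θ(n,k) = (n + k/2, n)` if `n` is odd, `(n/2 + k, n/2)` if `n` is even. -/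
def θmap (p : ℕ × ℕ) : ℕ × ℕ :=
  if p.1 % 2 = 1 then (p.1 + p.2 / 2, p.1) else (p.1 / 2 + p.2, p.1 / 2)

/-- `η(m,q) = (q, 2(m-q))` if `m - q` is even, `(2q, m-q)` if `m - q` is odd. -/
def ηmap (p : ℕ × ℕ) : ℕ × ℕ :=
  if (p.1 - p.2) % 2 = 0 then (p.2, 2 * (p.1 - p.2)) else (2 * p.2, p.1 - p.2)

/-- The maps `θ : S → T` and `η : T → S` are well-defined, mutually inverse
bijections. -/
theorem theta_eta_bijections :
    (∀ p ∈ Sset, θmap p ∈ Tset) ∧ (∀ p ∈ Tset, ηmap p ∈ Sset) ∧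
    (∀ p ∈ Sset, ηmap (θmap p) = p) ∧ (∀ p ∈ Tset, θmap (ηmap p) = p) := by
  refine ⟨?_, ?_, ?_, ?_⟩
  · rintro ⟨n, k⟩ ⟨hn, hk, hcop, hn3, hpar, hk4⟩
    dsimp only at hn hk hcop hn3 hpar hk4
    simp only [θmap]
    by_cases h : n % 2 = 1
    · -- n odd, k ≡ 0 mod 4
      have hk0 : k % 4 = 0 := by omega
      rw [if_pos h]
      refine ⟨by omega, by omega, ?_⟩
      show Nat.Coprime (n + k / 2) n
      have h2 : Nat.Coprime (2 * (k / 2)) n := by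
        rw [show 2 * (k / 2) = k by omega]; exact hcop.symm
      have h3 : Nat.Coprime (k / 2) n := h2.coprime_dvd_left ⟨2, by ring⟩
      rw [add_comm, Nat.coprime_add_self_left]
      exact h3
    · -- n even, k odd
      rw [if_neg h]
      refine ⟨by omega, by omega, ?_⟩
      show Nat.Coprime (n / 2 + k) (n / 2)
      have h2 : Nat.Coprime (2 * (n / 2)) k := by
        rw [show 2 * (n / 2) = n by omega]; exact hcop
      have h3 : Nat.Coprime (n / 2) k := h2.coprime_dvd_left ⟨2, by ring⟩
      rw [Nat.coprime_comm, Nat.add_comm (n / 2) k, Nat.coprime_add_self_right]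
      exact h3
  · rintro ⟨m, q⟩ ⟨hq, hqm, hcop⟩
    dsimp only at hq hqm hcop
    simp only [ηmap]
    have hcq : Nat.Coprime q (m - q) := by
      rw [Nat.coprime_sub_self_right (le_of_lt hqm)]; exact hcop.symm
    have hqodd : (m - q) % 2 = 0 → q % 2 = 1 := by
      intro h
      rcases Nat.even_or_odd q with he | ho
      · exfalso
        have h2q : 2 ∣ q := he.two_dvd
        have h2mq : 2 ∣ (m - q) := Nat.dvd_of_mod_eq_zero h
        have h2m : 2 ∣ m := by omega
        exact absurd ((hcop.coprime_dvd_left h2m).eq_one_of_dvd h2q) (by norm_num)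
      · exact Nat.odd_iff.mp ho
    by_cases h : (m - q) % 2 = 0
    · -- m, q both odd
      rw [if_pos h]
      refine ⟨by omega, by omega, ?_, by omega, ?_, ?_⟩
      · show Nat.Coprime q (2 * (m - q))
        exact Nat.Coprime.mul_right
          (Nat.coprime_two_right.mpr (Nat.odd_iff.mpr (hqodd h))) hcq
      · show q % 2 ≠ 2 * (m - q) % 2
        have := hqodd h
        omega
      · show 2 * (m - q) % 4 ≠ 2
        omega
    · rw [if_neg h]
      refine ⟨by omega, by omega, ?_, by omega, ?_, ?_⟩
      · show Nat.Coprime (2 * q) (m - q)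
        exact Nat.Coprime.mul
          (Nat.coprime_two_left.mpr (Nat.odd_iff.mpr (by omega))) hcq
      · show 2 * q % 2 ≠ (m - q) % 2
        omega
      · show (m - q) % 4 ≠ 2
        omega
  · rintro ⟨n, k⟩ ⟨hn, hk, hcop, hn3, hpar, hk4⟩
    dsimp only at hn hk hcop hn3 hpar hk4
    simp only [θmap]
    by_cases h : n % 2 = 1
    · have hk0 : k % 4 = 0 := by omega
      rw [if_pos h]
      simp only [ηmap]
      rw [if_pos (show ((n + k / 2, n).1 - (n + k / 2, n).2) % 2 = 0 by
        dsimp only; omega)]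
      simp only [Prod.mk.injEq]
      refine ⟨by first | trivial | omega, by first | trivial | omega⟩
    · rw [if_neg h]
      simp only [ηmap]
      rw [if_neg (show ¬((n / 2 + k, n / 2).1 - (n / 2 + k, n / 2).2) % 2 = 0 by
        dsimp only; omega)]
      simp only [Prod.mk.injEq]
      refine ⟨by first | trivial | omega, by first | trivial | omega⟩
  · rintro ⟨m, q⟩ ⟨hq, hqm, hcop⟩
    dsimp only at hq hqm hcop
    simp only [ηmap]
    have hqodd : (m - q) % 2 = 0 → q % 2 = 1 := by
      intro h
      rcases Nat.even_or_odd q with he | ho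
      · exfalso
        have h2q : 2 ∣ q := he.two_dvd
        have h2mq : 2 ∣ (m - q) := Nat.dvd_of_mod_eq_zero h
        have h2m : 2 ∣ m := by omega
        exact absurd ((hcop.coprime_dvd_left h2m).eq_one_of_dvd h2q) (by norm_num)
      · exact Nat.odd_iff.mp ho
    by_cases h : (m - q) % 2 = 0
    · rw [if_pos h]
      simp only [θmap]
      rw [if_pos (show (q, 2 * (m - q)).1 % 2 = 1 from hqodd h)]
      simp only [Prod.mk.injEq]
      refine ⟨by first | trivial | omega, by first | trivial | omega⟩
    · rw [if_neg h]
      simp only [θmap]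
      rw [if_neg (show ¬(2 * q, m - q).1 % 2 = 1 by dsimp only; omega)]
      simp only [Prod.mk.injEq]
      refine ⟨by first | trivial | omega, by first | trivial | omega⟩
end

section
/- Let n ≥ 3 be odd, k ≡ 0 (mod 4) with gcd(n,k) = 1, and let ω be a primitive (2nk)-th root of unity. Then the subgroup of GL(2) generated by diag(ω^{2k}, ω^{-2k}) and antidiag(ωⁿ, ωⁿ) equals the subgroup generated by diag(ω^{k}, ω^{-k}) and antidiag(ωⁿ, ωⁿ). -/
private lemma pow_diag_fin_two {K : Type*} [Field K] (a b : K) (m : ℕ) :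
    (!![a, 0; 0, b] : Matrix (Fin 2) (Fin 2) K) ^ m = !![a ^ m, 0; 0, b ^ m] := by
  induction m with
  | zero => simp [Matrix.one_fin_two]
  | succ i ih =>
    rw [pow_succ, ih]
    simp [Matrix.mul_fin_two, ← pow_succ]

set_option maxHeartbeats 1000000 in
/-- Let `n ≥ 3` be odd, `k ≡ 0 (mod 4)` with `gcd(n,k) = 1`, and `ω` a primitive
`2nk`-th root of unity. Then
`⟨diag(ω^{2k}, ω^{-2k}), antidiag(ω^n, ω^n)⟩ = ⟨diag(ω^k, ω^{-k}), antidiag(ω^n, ω^n)⟩`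
inside `GL₂`. -/
theorem closure_eq_closure_Dmq {K : Type*} [Field K] [IsAlgClosed K] [CharZero K]
    (n k : ℕ) (hn3 : 3 ≤ n) (hn : Odd n) (hk : k % 4 = 0) (hk0 : 0 < k)
    (hcop : Nat.Coprime n k)
    (ω : K) (hω : IsPrimitiveRoot ω (2 * n * k))
    (g₁ g₂ h : (Matrix (Fin 2) (Fin 2) K)ˣ)
    (hg₁ : (↑g₁ : Matrix (Fin 2) (Fin 2) K) = !![ω ^ (2 * k), 0; 0, ω⁻¹ ^ (2 * k)])
    (hg₂ : (↑g₂ : Matrix (Fin 2) (Fin 2) K) = !![ω ^ k, 0; 0, ω⁻¹ ^ k])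
    (hh : (↑h : Matrix (Fin 2) (Fin 2) K) = !![0, ω ^ n; ω ^ n, 0]) :
    Subgroup.closure {g₁, h} = Subgroup.closure {g₂, h} := by
  have hω0 : ω ≠ 0 := hω.ne_zero (by positivity)
  have hcyc : ω ^ (2 * n * k) = 1 := hω.pow_eq_one
  obtain ⟨r, hr⟩ := hn
  obtain ⟨j, hj⟩ := Nat.dvd_of_mod_eq_zero hk
  -- g₁ = g₂ ^ 2
  have e1 : g₁ = g₂ ^ 2 := by
    ext
    rw [Units.val_pow_eq_pow_val, hg₁, hg₂, pow_diag_fin_two, ← pow_mul, ← pow_mul,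
      mul_comm k 2]
  -- h ^ k is a scalar matrix
  have hhk : (↑h : Matrix (Fin 2) (Fin 2) K) ^ k = !![ω ^ (n * k), 0; 0, ω ^ (n * k)] := by
    have h2 : (↑h : Matrix (Fin 2) (Fin 2) K) ^ 2 = !![ω ^ n * ω ^ n, 0; 0, ω ^ n * ω ^ n] := by
      rw [pow_two, hh]
      simp [Matrix.mul_fin_two]
    have : k = 2 * (2 * j) := by omega
    rw [this, pow_mul, h2, pow_diag_fin_two, ← pow_add, ← pow_mul]
    ring_nf
  -- g₂ = g₁ ^ (r+1) * h ^ k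
  have ha : (ω ^ (2 * k)) ^ (r + 1) * ω ^ (n * k) = ω ^ k := by
    rw [← pow_mul, ← pow_add]
    have : 2 * k * (r + 1) + n * k = k + 2 * n * k := by subst hr; ring
    rw [this, pow_add, hcyc, mul_one]
  have hb : ((ω ^ (2 * k)) ^ (r + 1))⁻¹ * ω ^ (n * k) = (ω ^ k)⁻¹ := by
    rw [← pow_mul, show 2 * k * (r + 1) = k + n * k by subst hr; ring, pow_add, mul_inv,
      mul_assoc, inv_mul_cancel₀ (pow_ne_zero _ hω0), mul_one]
  have e2 : g₂ = g₁ ^ (r + 1) * h ^ k := by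
    ext
    rw [Units.val_mul, Units.val_pow_eq_pow_val, Units.val_pow_eq_pow_val, hg₁, hg₂, hhk,
      pow_diag_fin_two]
    simp [Matrix.mul_fin_two, ha, hb]
  have hm1 : g₁ ∈ Subgroup.closure ({g₁, h} : Set (Matrix (Fin 2) (Fin 2) K)ˣ) :=
    Subgroup.subset_closure (Set.mem_insert _ _)
  have hm2 : h ∈ Subgroup.closure ({g₁, h} : Set (Matrix (Fin 2) (Fin 2) K)ˣ) :=
    Subgroup.subset_closure (Set.mem_insert_of_mem _ rfl)
  have hm3 : g₂ ∈ Subgroup.closure ({g₂, h} : Set (Matrix (Fin 2) (Fin 2) K)ˣ) :=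
    Subgroup.subset_closure (Set.mem_insert _ _)
  have hm4 : h ∈ Subgroup.closure ({g₂, h} : Set (Matrix (Fin 2) (Fin 2) K)ˣ) :=
    Subgroup.subset_closure (Set.mem_insert_of_mem _ rfl)
  have c1 : g₁ ∈ Subgroup.closure ({g₂, h} : Set (Matrix (Fin 2) (Fin 2) K)ˣ) := by
    rw [e1]; exact pow_mem hm3 2
  have c2 : g₂ ∈ Subgroup.closure ({g₁, h} : Set (Matrix (Fin 2) (Fin 2) K)ˣ) := by
    rw [e2]; exact mul_mem (pow_mem hm1 _) (pow_mem hm2 _)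
  apply le_antisymm <;> rw [Subgroup.closure_le] <;> intro x hx <;>
    rcases hx with rfl | rfl
  · exact c1
  · exact hm4
  · exact c2
  · exact hm2
end

section
/- Let n > k be odd coprime positive integers and let [γ₁, …, γ_{d-1}] be the Hirzebruch-Jung continued fraction expansion of 2n/(n+k) (note γ₁ = 2). Setting β₂ = γ₂ and α = [γ₃, γ₄, …, γ_{d-1}] (assuming d > 3, i.e. k ≥ 3), one has [γ₃+1, γ₄, …, γ_{d-1}] = α + 1 = (kβ₂ - (n-k)/2)/(kβ₂ - (n+k)/2). -/
lemma range_map_cons (γ : ℕ → ℤ) (m c : ℕ) :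
    (List.range (m+1)).map (fun i => γ (i + c)) =
      γ c :: (List.range m).map (fun i => γ (i + (c+1))) := by
  rw [List.range_succ_eq_map, List.map_cons, List.map_map]
  simp only [Nat.zero_add]
  congr 1
  refine List.map_congr_left fun i _ => ?_
  simp only [Function.comp]
  congr 1
  omega

/-- Let `n > k ≥ 3` be odd coprime positive integers with
`2n/(n+k) = [γ₁, …, γ_{d-1}]` as a Hirzebruch–Jung continued fraction (so `γ₁ = 2`),
`β₂ = γ₂` and `α = [γ₃, …, γ_{d-1}]` (with `d > 3`). Then
`[γ₃+1, γ₄, …, γ_{d-1}] = α + 1 = (kβ₂ - (n-k)/2)/(kβ₂ - (n+k)/2)`. -/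
theorem hj_tail_identity (n k : ℕ) (hn : Odd n) (hk : Odd k)
    (hcop : Nat.Coprime n k) (hkn : k < n) (hk3 : 3 ≤ k)
    (d : ℕ) (hd : 3 < d) (γ : ℕ → ℤ)
    (hγval : hjEval ((List.range (d - 1)).map (fun i => γ (i + 1))) = (2 * n : ℚ) / (n + k))
    (hγ1 : γ 1 = 2) (hγi : ∀ i, 2 ≤ i → i ≤ d - 1 → 2 ≤ γ i) :
    hjEval ((γ 3 + 1) :: (List.range (d - 4)).map (fun i => γ (i + 4))) =
      hjEval ((List.range (d - 3)).map (fun i => γ (i + 3))) + 1 ∧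
    hjEval ((List.range (d - 3)).map (fun i => γ (i + 3))) + 1 =
      ((k : ℚ) * γ 2 - ((n : ℚ) - k) / 2) / ((k : ℚ) * γ 2 - ((n : ℚ) + k) / 2) := by
  obtain ⟨e, rfl⟩ : ∃ e, d = e + 4 := ⟨d - 4, by omega⟩
  have h1 : e + 4 - 1 = (e + 2) + 1 := by omega
  have h3 : e + 4 - 3 = e + 1 := by omega
  have h4 : e + 4 - 4 = e := by omega
  rw [h1, range_map_cons, range_map_cons, range_map_cons] at hγval
  rw [h3, h4, range_map_cons]
  set r : ℚ := hjEval ((List.range e).map (fun i => γ (i + 4))) with hr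
  set t : ℚ := hjEval (γ 3 :: (List.range e).map (fun i => γ (i + 4))) with ht
  have httail : t = (γ 3 : ℚ) - 1 / r := rfl
  have part1 : hjEval ((γ 3 + 1) :: (List.range e).map (fun i => γ (i + 4))) = t + 1 := by
    show ((γ 3 + 1 : ℤ) : ℚ) - 1 / r = t + 1
    rw [httail]; push_cast; ring
  refine ⟨part1, ?_⟩
  have hγval' : (2 : ℚ) - 1 / ((γ 2 : ℚ) - 1 / t) = 2 * (n : ℚ) / ((n : ℚ) + k) := by
    have h0 : hjEval (γ 1 :: γ 2 :: γ 3 :: (List.range e).map (fun i => γ (i + 4)))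
        = (γ 1 : ℚ) - 1 / ((γ 2 : ℚ) - 1 / t) := rfl
    rw [h0, hγ1] at hγval
    exact_mod_cast hγval
  have hK : (k : ℚ) ≠ 0 := by positivity
  have hNK : (n : ℚ) + k ≠ 0 := by positivity
  have hkd : ¬ ((k : ℤ) ∣ (n : ℤ)) := by
    intro h
    have h' : (k : ℕ) ∣ n := Int.ofNat_dvd.mp h
    have := Nat.le_of_dvd (by omega) (Nat.dvd_gcd h' dvd_rfl)
    rw [hcop] at this
    omega
  have hnz2 : (2 : ℚ) * k * γ 2 - ((n : ℚ) + k) ≠ 0 := by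
    intro h
    apply hkd
    have hz : (2 * k * γ 2 - (n + k) : ℤ) = 0 := by exact_mod_cast h
    have hdvd : (k : ℤ) ∣ (n : ℤ) + k := ⟨2 * γ 2, by linarith⟩
    exact (dvd_add_left (dvd_refl (k : ℤ))).mp hdvd
  set X : ℚ := (γ 2 : ℚ) - 1 / t with hX
  have hXne : X ≠ 0 := by
    intro h
    rw [h, div_zero, sub_zero, eq_div_iff hNK] at hγval'
    exact hK (by linarith)
  have h1X : 1 / X = 2 * (k : ℚ) / ((n : ℚ) + k) := by
    have hc : (2 : ℚ) - 2 * n / ((n : ℚ) + k) = 2 * k / ((n : ℚ) + k) := by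
      field_simp; ring
    linarith [hγval', hc]
  have hXval : X = ((n : ℚ) + k) / (2 * k) := by
    rw [← one_div_one_div X, h1X, one_div_div]
  have h1t : 1 / t = (2 * (k : ℚ) * γ 2 - ((n : ℚ) + k)) / (2 * k) := by
    have : 1 / t = (γ 2 : ℚ) - X := by rw [hX]; ring
    rw [this, hXval]; field_simp
  have htval : t = 2 * (k : ℚ) / (2 * (k : ℚ) * γ 2 - ((n : ℚ) + k)) := by
    rw [← one_div_one_div t, h1t, one_div_div]
  have hden : (k : ℚ) * γ 2 - ((n : ℚ) + k) / 2 ≠ 0 := by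
    intro h; apply hnz2; linarith
  rw [htval, div_add' _ _ _ hnz2, div_eq_div_iff hnz2 hden]
  ring
end
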